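/- arXiv:2508.17913 — 2 statements merged into one kernel-verified Lean document; each statement's English description precedes it below -/
import Mathlib

section
/- For a uniformly random challenge c ∈ ZMod q, the probability that a fixed adversarial pair (α, z) with α = g^t satisfies the verification equation g^z = α · pk^c is at most 1/q when pk ≠ 1 (exactly the number of c with c·sk = z − t is one), i.e., the set {c : ZMod q | g^z = α * pk^c} has cardinality at most 1. -/
/-- For a fixed adversarial pair (α, z) with α = g^t and pk = g^sk, sk ≠ 0, the
    set of challenges c satisfying the verification equation has at most one element. -/
theorem challenge_success_set_small {G : Type*} [CommGroup G] (q : ℕ) [Fact q.Prime]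
    (g : G) (horder : orderOf g = q)
    (hinj : Function.Injective (fun x : ZMod q => g ^ x.val))
    (sk t z : ZMod q) (hsk : sk ≠ 0) (pk α : G)
    (hpk : pk = g ^ sk.val) (hα : α = g ^ t.val) :
    Set.ncard {c : ZMod q | g ^ z.val = α * pk ^ c.val} ≤ 1 := by
  have hq : q ≠ 0 := (Fact.out : q.Prime).ne_zero
  have hsub : {c : ZMod q | g ^ z.val = α * pk ^ c.val} ⊆ {(z - t) / sk} := by
    intro c hc
    simp only [Set.mem_setOf_eq, hα, hpk] at hc
    rw [← pow_mul, ← pow_add] at hc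
    have hval : (t + sk * c).val = (t.val + sk.val * c.val) % q := by
      rw [ZMod.val_add, ZMod.val_mul]
      conv_rhs => rw [Nat.add_mod, ← Nat.mod_mod_of_dvd (sk.val * c.val) dvd_rfl, ← Nat.add_mod]
    have h2 : g ^ (t + sk * c).val = g ^ (t.val + sk.val * c.val) := by
      have hp := pow_mod_orderOf (x := g) (n := t.val + sk.val * c.val)
      rw [horder] at hp
      rw [hval, hp]
    have h3 : z = t + sk * c := hinj (by simpa using hc.trans h2.symm)
    have : c = (z - t) / sk := by
      field_simp [h3]
      rw [h3]; ring
    simp [this]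
  calc Set.ncard {c : ZMod q | g ^ z.val = α * pk ^ c.val}
      ≤ Set.ncard {(z - t) / sk} := Set.ncard_le_ncard hsub (Set.finite_singleton _)
    _ = 1 := Set.ncard_singleton _
end

section
/- Simulated transcripts are identically distributed to real ones: for fixed sk and c, the map from real randomness r to transcripts (g^r, c, r + c·sk) and the map from simulator randomness z to transcripts (g^z · (g^sk)^(−c), c, z) have the same image, namely the set of all accepting transcripts with challenge c; moreover both maps are bijections onto this set. -/
/-- Simulated transcripts are identically distributed to real ones: both the
    real-prover map and the simulator map are bijections from ZMod q onto the
    set of accepting transcripts with challenge c. -/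
theorem schnorr_transcript_distributions {G : Type*} [CommGroup G] (q : ℕ) [Fact q.Prime]
    (g : G) (horder : orderOf g = q)
    (hbij : Function.Bijective (fun x : ZMod q => g ^ x.val))
    (sk c : ZMod q) (pk : G) (hpk : pk = g ^ sk.val) :
    Set.BijOn (fun r : ZMod q => ((g ^ r.val : G), r + c * sk)) Set.univ
      {p : G × ZMod q | g ^ p.2.val = p.1 * pk ^ c.val} ∧
    Set.BijOn (fun z : ZMod q => ((g ^ z.val * (pk ^ c.val)⁻¹ : G), z)) Set.univ
      {p : G × ZMod q | g ^ p.2.val = p.1 * pk ^ c.val} := by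
  have hq : NeZero q := ⟨(Fact.out : q.Prime).ne_zero⟩
  have hg : ∀ a b : ZMod q, g ^ (a + b).val = g ^ a.val * g ^ b.val := by
    intro a b
    have h := pow_mod_orderOf g (a.val + b.val)
    rw [horder] at h
    rw [ZMod.val_add, h, pow_add]
  have hm : ∀ a b : ZMod q, g ^ (a * b).val = (g ^ a.val) ^ b.val := by
    intro a b
    have h := pow_mod_orderOf g (a.val * b.val)
    rw [horder] at h
    rw [ZMod.val_mul, h, pow_mul]
  have hpk' : pk ^ c.val = g ^ (c * sk).val := by
    rw [hpk, mul_comm c sk, hm]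
  constructor
  · refine ⟨fun r _ => ?_, fun r _ s _ h => ?_, fun p hp => ?_⟩
    · show g ^ (r + c * sk).val = g ^ r.val * pk ^ c.val
      rw [hg, hpk']
    · have := congrArg Prod.snd h
      simpa using this
    · refine ⟨p.2 - c * sk, Set.mem_univ _, ?_⟩
      have : g ^ (p.2 - c * sk).val = p.1 := by
        have h2 : g ^ ((p.2 - c * sk) + c * sk).val = g ^ p.2.val := by
          rw [sub_add_cancel]
        rw [hg] at h2
        have hp' : g ^ p.2.val = p.1 * pk ^ c.val := hp
        rw [hp', hpk'] at h2
        exact mul_right_cancel h2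
      simp [this]
  · refine ⟨fun z _ => ?_, fun z _ w _ h => ?_, fun p hp => ?_⟩
    · show g ^ z.val = g ^ z.val * (pk ^ c.val)⁻¹ * pk ^ c.val
      group
    · have := congrArg Prod.snd h
      simpa using this
    · refine ⟨p.2, Set.mem_univ _, ?_⟩
      have hp' : g ^ p.2.val = p.1 * pk ^ c.val := hp
      have : g ^ p.2.val * (pk ^ c.val)⁻¹ = p.1 := by
        rw [hp']; group
      simp [this]
end
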